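/- In any orthomodular lattice, the Kalmbach implication is expressible via the relevance implication: a →₃ b = (a →₅ (b →₅ a)) →₅ (a →₅ b), where →₃ is the Kalmbach implication x →₃ y = ((xᶜ ∧ y) ∨ (xᶜ ∧ yᶜ)) ∨ (x ∧ (xᶜ ∨ y)) and →₅ is the relevance implication x →₅ y = ((x ∧ y) ∨ (xᶜ ∧ y)) ∨ (xᶜ ∧ yᶜ). -/
import Mathlib


class QuantumOML (α : Type*) extends Lattice α, BoundedOrder α where
  oc : α → α
  oc_involutive : ∀ a : α, oc (oc a) = a
  oc_antitone : ∀ a b : α, a ≤ b → oc b ≤ oc a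
  sup_oc : ∀ a : α, a ⊔ oc a = ⊤
  inf_oc : ∀ a : α, a ⊓ oc a = ⊥
  orthomodular : ∀ a b : α, a ≤ b → b = a ⊔ (oc a ⊓ b)

open QuantumOML

variable {α : Type*} [QuantumOML α]

/-- Kalmbach implication -/
def imp3 (a b : α) : α := ((oc a ⊓ b) ⊔ (oc a ⊓ oc b)) ⊔ (a ⊓ (oc a ⊔ b))

/-- relevance implication -/
def imp5 (a b : α) : α := ((a ⊓ b) ⊔ (oc a ⊓ b)) ⊔ (oc a ⊓ oc b)

private lemma oc_le_oc {a b : α} (h : a ≤ b) : oc b ≤ oc a := oc_antitone a b h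

private lemma le_oc_of_le_oc {a b : α} (h : a ≤ oc b) : b ≤ oc a := by
  have h2 := oc_antitone _ _ h
  rwa [oc_involutive] at h2

private lemma oc_sup (a b : α) : oc (a ⊔ b) = oc a ⊓ oc b := by
  apply le_antisymm
  · exact le_inf (oc_le_oc le_sup_left) (oc_le_oc le_sup_right)
  · have h : a ⊔ b ≤ oc (oc a ⊓ oc b) := by
      apply sup_le
      · have := oc_le_oc (inf_le_left (a := oc a) (b := oc b))
        rwa [oc_involutive] at this
      · have := oc_le_oc (inf_le_right (a := oc a) (b := oc b))
        rwa [oc_involutive] at this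
    exact le_oc_of_le_oc h

private lemma oc_inf (a b : α) : oc (a ⊓ b) = oc a ⊔ oc b := by
  have h := congrArg oc (oc_sup (oc a) (oc b))
  rw [oc_involutive, oc_involutive, oc_involutive] at h
  exact h.symm

/-- If `p ≤ a` and `q ≤ aᶜ` then `a ⊓ (p ⊔ q) = p`. -/
private lemma meet_join_orth {a p q : α} (hp : p ≤ a) (hq : q ≤ oc a) :
    a ⊓ (p ⊔ q) = p := by
  apply le_antisymm
  · have h1 : p ≤ a ⊓ (p ⊔ q) := le_inf hp le_sup_left
    rw [orthomodular p (a ⊓ (p ⊔ q)) h1]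
    apply sup_le le_rfl
    have h2 : oc p ⊓ (a ⊓ (p ⊔ q)) ≤ oc (p ⊔ q) := by
      rw [oc_sup]
      refine le_inf inf_le_left ?_
      calc oc p ⊓ (a ⊓ (p ⊔ q)) ≤ a := le_trans inf_le_right inf_le_left
        _ ≤ oc q := le_oc_of_le_oc hq
    have h3 : oc p ⊓ (a ⊓ (p ⊔ q)) ≤ (p ⊔ q) ⊓ oc (p ⊔ q) :=
      le_inf (le_trans inf_le_right inf_le_right) h2
    rw [inf_oc] at h3
    exact h3.trans bot_le
  · exact le_inf hp le_sup_left

theorem kalmbach_via_relevance (a b : α) :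
    imp3 a b = imp5 (imp5 a (imp5 b a)) (imp5 a b) := by
  set p : α := (a ⊓ b) ⊔ (a ⊓ oc b) with hp
  set q : α := oc a ⊓ oc b with hq
  have hpa : p ≤ a := sup_le inf_le_left inf_le_left
  have hqa : q ≤ oc a := inf_le_left
  have ht : imp5 b a = p ⊔ q := by
    simp only [imp5, hp, hq]
    rw [inf_comm b a, inf_comm (oc b) a, inf_comm (oc b) (oc a)]
  have hocq : oc q = a ⊔ b := by
    rw [hq, oc_inf, oc_involutive, oc_involutive]
  have hy : imp5 a (imp5 b a) = p ⊔ oc a := by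
    rw [ht]
    simp only [imp5]
    have h1 : a ⊓ (p ⊔ q) = p := meet_join_orth hpa hqa
    have h2 : oc a ⊓ (p ⊔ q) = q := by
      rw [sup_comm p q]
      exact meet_join_orth hqa (by rw [oc_involutive]; exact hpa)
    have h3 : oc a ⊓ oc (p ⊔ q) = oc a ⊓ (a ⊔ b) := by
      rw [oc_sup, ← inf_assoc, inf_eq_left.mpr (oc_le_oc hpa), hocq]
    have h4 : q ⊔ (oc a ⊓ (a ⊔ b)) = oc a := by
      have h5 := orthomodular q (oc a) hqa
      rw [hocq, inf_comm (a ⊔ b) (oc a)] at h5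
      exact h5.symm
    rw [h1, h2, h3, sup_assoc, h4]
  have hx_le : imp5 a b ≤ p ⊔ oc a := by
    simp only [imp5]
    refine sup_le (sup_le ?_ ?_) ?_
    · exact le_sup_of_le_left le_sup_left
    · exact le_sup_of_le_right inf_le_left
    · exact le_sup_of_le_right inf_le_left
  have key : ∀ x : α, x ≤ p ⊔ oc a → imp5 (p ⊔ oc a) x = x ⊔ oc (p ⊔ oc a) := by
    intro x hx
    simp only [imp5]
    have h7 : oc (p ⊔ oc a) ⊓ x = ⊥ := by
      apply le_antisymm _ bot_le
      calc oc (p ⊔ oc a) ⊓ x ≤ oc (p ⊔ oc a) ⊓ (p ⊔ oc a) := inf_le_inf_left _ hx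
        _ = ⊥ := by rw [inf_comm]; exact inf_oc _
    rw [inf_eq_right.mpr hx, inf_eq_left.mpr (oc_le_oc hx), h7, sup_bot_eq]
  rw [hy, key _ hx_le]
  have hw : oc (p ⊔ oc a) = ((oc a ⊔ oc b) ⊓ (oc a ⊔ b)) ⊓ a := by
    rw [oc_sup, oc_involutive, hp, oc_sup, oc_inf, oc_inf, oc_involutive]
  have hg : a ⊓ (oc a ⊔ b) = (a ⊓ b) ⊔ oc (p ⊔ oc a) := by
    have hle : a ⊓ b ≤ a ⊓ (oc a ⊔ b) := inf_le_inf_left a le_sup_right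
    rw [orthomodular _ _ hle]
    congr 1
    rw [hw, oc_inf]
    simp [inf_comm, inf_assoc, inf_left_comm]
  simp only [imp3, imp5]
  rw [hg]
  simp [sup_comm, sup_assoc, sup_left_comm]
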